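/- Let M(𝒜,ℬ) be a principal group of directed automorphisms of a spherically homogeneous rooted tree T_m̄ with bounded valencies. Then for every element h ∈ M(𝒜,ℬ) there exists n_h ∈ ℕ such that for every n ≥ n_h and every level-n vertex w, the section h|_w lies in 𝒜_n ∪ ℬ_n. -/

import Mathlib

open scoped ENNReal
namespace Paper
abbrev Vertex (m : ℕ → ℕ) (n : ℕ) := (i : Fin n) → Fin (m i)
variable {m : ℕ → ℕ}
def restr {n : ℕ} (w : Vertex m (n + 1)) : Vertex m n := fun i => w i.castSucc
def restrLe {n N : ℕ} (h : n ≤ N) (w : Vertex m N) : Vertex m n :=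
  fun i => w ⟨i, lt_of_lt_of_le i.2 h⟩
def AutT (m : ℕ → ℕ) : Subgroup (∀ n, Equiv.Perm (Vertex m n)) where
  carrier := {g | ∀ (n : ℕ) (w : Vertex m (n + 1)), restr (g (n + 1) w) = g n (restr w)}
  one_mem' := by intro n w; rfl
  mul_mem' := by
    intro a b ha hb n w
    show restr ((a (n+1)) ((b (n+1)) w)) = (a n) ((b n) (restr w))
    rw [ha, hb]
  inv_mem' := by
    intro a ha n w
    show restr ((a (n+1))⁻¹ w) = (a n)⁻¹ (restr w)
    apply (a n).injective
    have h1 := ha n ((a (n+1))⁻¹ w)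
    rw [show (a (n+1)) ((a (n+1))⁻¹ w) = w from Equiv.apply_symm_apply _ _] at h1
    rw [← h1]
    exact (Equiv.apply_symm_apply _ _).symm
def app {n : ℕ} (g : AutT m) (v : Vertex m n) : Vertex m n := g.val n v
theorem restrLe_app (g : AutT m) : ∀ {N n : ℕ} (h : n ≤ N) (w : Vertex m N),
    restrLe h (g.val N w) = g.val n (restrLe h w) := by
  intro N
  induction N with
  | zero =>
    intro n h w
    have hn : n = 0 := Nat.le_zero.mp h
    subst hn; rfl
  | succ N ih =>
    intro n h w
    rcases Nat.eq_or_lt_of_le h with rfl | h'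
    · rfl
    · have hN : n ≤ N := Nat.lt_succ_iff.mp h'
      calc restrLe h (g.val (N+1) w) = restrLe hN (restr (g.val (N+1) w)) := rfl
        _ = restrLe hN (g.val N (restr w)) := by rw [g.prop N w]
        _ = g.val n (restrLe hN (restr w)) := ih hN _
        _ = g.val n (restrLe h w) := rfl
abbrev shift (m : ℕ → ℕ) (n : ℕ) : ℕ → ℕ := fun i => m (n + i)
def vappend {n k : ℕ} (v : Vertex (shift m n) k) (w : Vertex m n) : Vertex m (n + k) :=
  fun i => if h : (i : ℕ) < n then w ⟨i, h⟩
    else Fin.cast (congrArg m (by omega : n + ((i : ℕ) - n) = (i : ℕ)))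
      (v ⟨(i : ℕ) - n, by omega⟩)
def topPart {n k : ℕ} (u : Vertex m (n + k)) : Vertex (shift m n) k :=
  fun i => u ⟨n + i, by omega⟩

theorem topPart_vappend {n k : ℕ} (v : Vertex (shift m n) k) (w : Vertex m n) :
    topPart (vappend v w) = v := by
  funext i
  simp only [topPart, vappend, Fin.val_mk]
  rw [dif_neg (by omega)]
  apply Fin.ext
  simp only [Fin.coe_cast]
  exact congrArg (fun t : Fin k => (v t).1) (Fin.ext (by simp))

theorem restrLe_vappend {n k : ℕ} (v : Vertex (shift m n) k) (w : Vertex m n) :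
    restrLe (Nat.le_add_right n k) (vappend v w) = w := by
  funext i
  simp only [restrLe, vappend, Fin.val_mk]
  rw [dif_pos i.2]

theorem vappend_topPart {n k : ℕ} (u : Vertex m (n + k)) :
    vappend (topPart u) (restrLe (Nat.le_add_right n k) u) = u := by
  funext i
  by_cases h : (i : ℕ) < n
  · simp only [vappend, restrLe]
    rw [dif_pos h]
  · simp only [vappend, topPart, Fin.val_mk]
    rw [dif_neg h]
    apply Fin.ext
    simp only [Fin.coe_cast]
    exact congrArg (fun t : Fin (n+k) => (u t).1) (Fin.ext (by simp; omega))

theorem restr_vappend {n k : ℕ} (v : Vertex (shift m n) (k + 1)) (w : Vertex m n) :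
    restr (n := n + k) (vappend (n := n) (k := k + 1) v w) = vappend (restr v) w := by
  funext i
  by_cases h : (i : ℕ) < n
  · show vappend v w (Fin.castSucc i) = vappend (restr v) w i
    simp only [vappend]
    rw [dif_pos (show ((Fin.castSucc i : Fin (n+k+1)) : ℕ) < n from h), dif_pos h]
    rfl
  · show vappend v w (Fin.castSucc i) = vappend (restr v) w i
    simp only [vappend]
    rw [dif_neg (show ¬ ((Fin.castSucc i : Fin (n+k+1)) : ℕ) < n from h), dif_neg h]
    rfl

def secFun (g : AutT m) {n : ℕ} (w : Vertex m n) (k : ℕ)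
    (v : Vertex (shift m n) k) : Vertex (shift m n) k :=
  topPart (g.val (n + k) (vappend v w))

theorem secFun_spec (g : AutT m) {n : ℕ} (w : Vertex m n) (k : ℕ)
    (v : Vertex (shift m n) k) :
    g.val (n + k) (vappend v w) = vappend (secFun g w k v) (g.val n w) := by
  have h1 : restrLe (Nat.le_add_right n k) (g.val (n + k) (vappend v w)) = g.val n w := by
    rw [restrLe_app, restrLe_vappend]
  conv_lhs => rw [← vappend_topPart (g.val (n + k) (vappend v w))]
  rw [h1]
  rfl

theorem coe_inv_app (g : AutT m) (N : ℕ) (u : Vertex m N) :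
    (g⁻¹ : AutT m).val N ((g : AutT m).val N u) = u := by
  have h : ((g⁻¹ : AutT m) : ∀ n, Equiv.Perm (Vertex m n)) = (↑g)⁻¹ := rfl
  rw [h]
  exact Equiv.symm_apply_apply _ _

theorem secFun_left_inv (g : AutT m) {n : ℕ} (w : Vertex m n) (k : ℕ)
    (v : Vertex (shift m n) k) :
    secFun g⁻¹ (g.val n w) k (secFun g w k v) = v := by
  show topPart ((g⁻¹ : AutT m).val (n+k) (vappend (secFun g w k v) (g.val n w))) = v
  rw [← secFun_spec g w k v, coe_inv_app, topPart_vappend]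

def sectionEquiv (g : AutT m) {n : ℕ} (w : Vertex m n) (k : ℕ) :
    Equiv.Perm (Vertex (shift m n) k) where
  toFun := secFun g w k
  invFun := secFun g⁻¹ (g.val n w) k
  left_inv v := secFun_left_inv g w k v
  right_inv v := by
    have h2 : (g⁻¹ : AutT m)⁻¹ = g := inv_inv g
    have h3 : (g⁻¹ : AutT m).val n (g.val n w) = w := coe_inv_app g n w
    calc secFun g w k (secFun g⁻¹ (g.val n w) k v)
        = secFun (g⁻¹)⁻¹ ((g⁻¹ : AutT m).val n (g.val n w)) k
            (secFun g⁻¹ (g.val n w) k v) := by rw [h2, h3]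
      _ = v := secFun_left_inv g⁻¹ (g.val n w) k v

theorem secFun_restr (g : AutT m) {n : ℕ} (w : Vertex m n) (k : ℕ)
    (v : Vertex (shift m n) (k + 1)) :
    restr (secFun g w (k + 1) v) = secFun g w k (restr v) := by
  show restr (topPart (g.val (n + (k+1)) (vappend v w)))
      = topPart (g.val (n + k) (vappend (restr v) w))
  rw [← restr_vappend (n := n) (k := k) v w, ← g.prop (n + k) (vappend (n := n) (k := k + 1) v w)]
  rfl

/-- The section `g|_w` of a tree automorphism `g` at the level-`n` vertex `w`:
the unique automorphism of the shifted tree satisfying `(vw)·g = (v·g|_w)(w·g)`. -/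
def sectionAut (g : AutT m) {n : ℕ} (w : Vertex m n) : AutT (shift m n) :=
  ⟨fun k => sectionEquiv g w k, fun k v => secFun_restr g w k v⟩

/-! ### Distinguished vertices and predicates -/

/-- The level-`n` vertex `0⋯0` on the `0`-ray. -/
def rayV (hm : ∀ i, 0 < m i) (n : ℕ) : Vertex m n := fun i => ⟨0, hm i⟩

/-- The level-`(n+1)` neighbour `x0⋯0` of the `0`-ray: its only (possibly) non-zero
letter is the leading one, equal to `x`. -/
def nbrV (hm : ∀ i, 0 < m i) {n : ℕ} (x : Fin (m n)) : Vertex m (n + 1) :=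
  fun i => if h : (i : ℕ) = n then Fin.cast (congrArg m h).symm x else ⟨0, hm i⟩

/-- The level-`n` vertex obtained from `w0` by prepending zeros. -/
def padZero (hm : ∀ i, 0 < m i) {n₀ : ℕ} (w0 : Vertex m n₀) (n : ℕ) : Vertex m n :=
  fun i => if h : (i : ℕ) < n₀ then w0 ⟨i, h⟩ else ⟨0, hm i⟩

/-- The level-`(n+1)` vertex `x0⋯0w0`: the word `w0` at the bottom, the letter `x`
in the leading position, and zeros in between. -/
def padLead (hm : ∀ i, 0 < m i) {n₀ : ℕ} (w0 : Vertex m n₀) {n : ℕ} (x : Fin (m n)) :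
    Vertex m (n + 1) :=
  fun i => if h : (i : ℕ) < n₀ then w0 ⟨i, h⟩
    else if h2 : (i : ℕ) = n then Fin.cast (congrArg m h2).symm x else ⟨0, hm i⟩

/-- `w` lies on the `0`-ray. -/
def OnRay {n : ℕ} (w : Vertex m n) : Prop := ∀ i, (w i : ℕ) = 0

/-- `w` is a neighbour of the `0`-ray: its leading letter is non-zero and all other
letters are zero. -/
def IsNbr {n : ℕ} (w : Vertex m n) : Prop :=
  ∃ hn : 0 < n, (w ⟨n - 1, by omega⟩ : ℕ) ≠ 0 ∧
    ∀ i : Fin n, (i : ℕ) < n - 1 → (w i : ℕ) = 0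

/-- A *rooted* automorphism: it permutes the first level and all its sections at
vertices of level `≥ 1` are trivial (i.e. it is an element of `Sym(X_{m_1})`). -/
def IsRooted (g : AutT m) : Prop :=
  ∀ (n : ℕ) (w : Vertex m n), 0 < n → sectionAut g w = 1

/-- A *directed automorphism along the `0`-ray* (an element of `H_m̄`): it fixes the
`0`-ray, its sections away from the ray and its neighbours are trivial, and its
sections at neighbours of the ray are rooted. -/
def IsDirectedAut (g : AutT m) : Prop :=
  (∀ (n : ℕ) (w : Vertex m n), OnRay w → g.val n w = w) ∧
  (∀ (n : ℕ) (w : Vertex m n), ¬ OnRay w → ¬ IsNbr w → sectionAut g w = 1) ∧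
  (∀ (n : ℕ) (w : Vertex m n), IsNbr w → IsRooted (sectionAut g w))

/-- The group `𝒜_n` of `n`-th level sections of `𝒜` along the `0`-ray. -/
def Asub (hm : ∀ i, 0 < m i) (A : Subgroup (AutT m)) (n : ℕ) :
    Subgroup (AutT (shift m n)) :=
  Subgroup.closure {h | ∃ a ∈ A, h = sectionAut a (rayV hm n)}

/-- The group `ℬ_n` generated by the `n`-th level sections of `𝒜` at the neighbours
of the `0`-ray (trivial for `n = 0`, where there are no neighbours). -/
def Bsub (hm : ∀ i, 0 < m i) (A : Subgroup (AutT m)) : (n : ℕ) → Subgroup (AutT (shift m n))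
  | 0 => ⊥
  | (k + 1) =>
    Subgroup.closure {h | ∃ a ∈ A, ∃ x : Fin (m k), (x : ℕ) ≠ 0 ∧ h = sectionAut a (nbrV hm x)}

/-- The condition, for a word `w`, that position `i` is the position situated just
above the lowest non-zero letter of `w`. -/
def SpineCond {n : ℕ} (w : Vertex m n) (i : Fin n) : Prop :=
  ∃ p : Fin n, (w p : ℕ) ≠ 0 ∧ (∀ q : Fin n, (q : ℕ) < (p : ℕ) → (w q : ℕ) = 0) ∧
    (i : ℕ) = (p : ℕ) + 1

open Classical in
/-- The action of the spine-permutation automorphism `h_σ̄`: the letter just above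
the lowest non-zero letter is permuted (by the permutation attached to its
alphabet size); all-zero words are fixed. -/
noncomputable def spineFun (σ : ∀ j : ℕ, Equiv.Perm (Fin j)) {n : ℕ} (w : Vertex m n) :
    Vertex m n :=
  fun i => if SpineCond w i then (σ (m i)) (w i) else w i

/-! ### Probability measures, entropy, random walks -/

/-- `μ` is a probability measure (given by its density on a discrete group/set). -/
def IsProbMeas {G : Type*} (μ : G → ℝ) : Prop := (∀ g, 0 ≤ μ g) ∧ HasSum μ 1

/-- `μ` is symmetric. -/
def IsSymmMeas {G : Type*} [Group G] (μ : G → ℝ) : Prop := ∀ g, μ g⁻¹ = μ g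

/-- Convolution of two measures on a discrete group. -/
noncomputable def conv {G : Type*} [Group G] (μ ν : G → ℝ) : G → ℝ :=
  fun g => ∑' h, μ h * ν (h⁻¹ * g)

open Classical in
/-- `k`-fold convolution power `μ^{*k}` (with `μ^{*0} = δ_e`). -/
noncomputable def convPow {G : Type*} [Group G] (μ : G → ℝ) : ℕ → G → ℝ
  | 0 => fun g => if g = 1 then 1 else 0
  | (k + 1) => conv μ (convPow μ k)

/-- Shannon entropy `H(p) = -∑ p log p` of a discrete measure. -/
noncomputable def entropy {X : Type*} (p : X → ℝ) : ℝ := ∑' x, Real.negMulLog (p x)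

/-- Shannon entropy, valued in `ℝ≥0∞`. -/
noncomputable def entropyE {X : Type*} (p : X → ℝ) : ℝ≥0∞ :=
  ∑' x, ENNReal.ofReal (Real.negMulLog (p x))

/-- The Liouville property: every bounded `μ`-harmonic function is constant on the
subgroup generated by the support of `μ`. -/
def IsLiouville {G : Type*} [Group G] (μ : G → ℝ) : Prop :=
  ∀ f : G → ℝ, (∃ C, ∀ g, |f g| ≤ C) → (∀ g, f g = ∑' h, f (g * h) * μ h) →
    ∀ g ∈ Subgroup.closure (Function.support μ),
      ∀ h ∈ Subgroup.closure (Function.support μ), f g = f h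

/-- The position of the right random walk after `t` steps, as a function of the
increments `s 0, s 1, …` (the group element `s_t ⋯ s_2 s_1`; with this convention,
applying it to a point `x` performs the corresponding right walk on any space the
group acts on from the right). -/
def rwProd {G : Type*} [Group G] {k : ℕ} (s : Fin k → G) (t : ℕ) : G :=
  (((List.ofFn s).take t).reverse).prod

open Classical in
/-- The law of the pair (section/position) of the right `μ`-random walk observed at
the `j`-th visit of the trajectory `v·g_1, v·g_2, …` to the set `W`:
`visitLaw μ act v W sec j (h, u) = P(g at j-th visit has sec = h and position = u)`.
Here `act` is the (right) action used for the trajectory and `sec` the observable. -/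
noncomputable def visitLaw {G X H : Type*} [Group G] (μ : G → ℝ)
    (act : G → X → X) (v : X) (W : Set X) (sec : G → H) (j : ℕ) : H × X → ℝ :=
  fun p =>
    ∑' k : ℕ, ∑' s : Fin k → G,
      (∏ i, μ (s i)) *
        (if ((Finset.range k).filter fun t => act (rwProd s (t + 1)) v ∈ W).card = j
            ∧ act (rwProd s k) v ∈ W
            ∧ (sec (rwProd s k), act (rwProd s k) v) = p
          then 1 else 0)

/-! ### Electrical networks -/

/-- The Dirichlet energy of `f` with respect to the symmetric conductances `c`. -/
noncomputable def dirichlet {V : Type*} [Fintype V] (c : V → V → ℝ) (f : V → ℝ) : ℝ :=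
  (1 / 2) * ∑ u : V, ∑ v : V, c u v * (f u - f v) ^ 2

/-- Effective conductance between the disjoint vertex sets `A` and `B`. -/
noncomputable def effCond {V : Type*} [Fintype V] (c : V → V → ℝ) (A B : Set V) : ℝ :=
  sInf (dirichlet c '' {f | (∀ a ∈ A, f a = 1) ∧ (∀ b ∈ B, f b = 0)})

/-- Effective resistance between `A` and `B`, valued in `ℝ≥0∞` (infinite when the
effective conductance vanishes). -/
noncomputable def effResE {V : Type*} [Fintype V] (c : V → V → ℝ) (A B : Set V) : ℝ≥0∞ :=
  (ENNReal.ofReal (effCond c A B))⁻¹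

open Classical in
/-- Conductances of the Schreier graph of the action on level `n` with (multi-)edges
given by a generating set: `c u v = #{s ∈ gens : u·s = v}` for `u ≠ v`. -/
noncomputable def schreierCond (gens : Set (AutT m)) (n : ℕ) :
    Vertex m n → Vertex m n → ℝ :=
  fun u v => if u = v then 0 else (Set.ncard {s | s ∈ gens ∧ app s u = v} : ℝ)

open Classical in
/-- Conductances of the Schreier graph of the action on level `n`, with weights
`κ s` on the edge corresponding to the generator `s`. -/
noncomputable def schreierCondWt (S : Finset (AutT m)) (κ : AutT m → ℝ) (n : ℕ) :
    Vertex m n → Vertex m n → ℝ :=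
  fun u v => if u = v then 0 else ∑ s ∈ S.filter (fun s => app s u = v), κ s

/-- The set `𝔸_n` of level-`n` vertices where some generator `s ∈ S` has a
non-trivial section lying in `𝒜_n`. -/
def ASet (hm : ∀ i, 0 < m i) (A : Subgroup (AutT m)) (S : Finset (AutT m)) (n : ℕ) :
    Set (Vertex m n) :=
  {w | ∃ s ∈ S, sectionAut s w ∈ Asub hm A n ∧ sectionAut s w ≠ 1}

/-- The set `𝔹_n` of level-`n` vertices where some generator `s ∈ S` has a
non-trivial section lying in `ℬ_n`. -/
def BSet (hm : ∀ i, 0 < m i) (A : Subgroup (AutT m)) (S : Finset (AutT m)) (n : ℕ) :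
    Set (Vertex m n) :=
  {w | ∃ s ∈ S, sectionAut s w ∈ Bsub hm A n ∧ sectionAut s w ≠ 1}

/-- The orbit of a level-`n` vertex under a subgroup `G ≤ Aut(T_m)`. -/
def orbitOf (G : Subgroup (AutT m)) {n : ℕ} (v : Vertex m n) : Set (Vertex m n) :=
  {u | ∃ g : AutT m, g ∈ G ∧ app g v = u}

/-! ### Regular trees and automata -/

/-- The constant valency sequence (regular rooted tree `T_mm`). -/
abbrev constSeq (mm : ℕ) : ℕ → ℕ := fun _ => mm


/-- An invertible automaton over the alphabet of a regular tree: a finite set of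
automorphisms closed under taking sections at one-letter words. -/
def IsAutomaton {mm : ℕ} (A : Finset (AutT (constSeq mm))) : Prop :=
  ∀ a ∈ A, ∀ x : Vertex (constSeq mm) 1, sectionAut a x ∈ A

/-- Bounded activity: for every state `a`, the number of level-`n` words with
non-trivial section is bounded uniformly in `n`. -/
def IsBoundedActivity {mm : ℕ} (A : Finset (AutT (constSeq mm))) : Prop :=
  ∀ a ∈ A, ∃ B : ℕ, ∀ n : ℕ,
    Set.ncard {w : Vertex (constSeq mm) n | sectionAut a w ≠ 1} ≤ B

/-- Word length with respect to a finite symmetric generating set. -/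
noncomputable def wordLen {G : Type*} [Group G] (S : Set G) (g : G) : ℕ :=
  sInf {k | ∃ l : List G, l.length = k ∧ (∀ s ∈ l, s ∈ S) ∧ l.prod = g}

/-!
Write `h = s₁ ⋯ s_L` with every `sᵢ` in `𝒜 ∪ ℬ`; then `h|_w` is the product of the sections
of the `sᵢ` at the vertices of the path from `w` to its image under `h`. An element of `ℬ`
changes only the first letter and an element of `𝒜` only the lowest non-zero letter and the
one above it, so each step moves the highest non-zero letter up by at most one position.
Hence on a level `n > 2L` the path cannot meet both the `0`-ray and a neighbour of it. If it
avoids the neighbours, every factor is trivial or a section at the ray, so lies in `𝒜_n`; if it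
avoids the ray, every factor is trivial or a section at a neighbour, so lies in `ℬ_n`.
-/

theorem sectionAut_one {n : ℕ} (w : Vertex m n) : sectionAut (1 : AutT m) w = 1 :=
  Subtype.ext <| funext fun _ => Equiv.ext fun v => topPart_vappend v w

theorem sectionAut_mul (g g' : AutT m) {n : ℕ} (w : Vertex m n) :
    sectionAut (g * g') w = sectionAut g (app g' w) * sectionAut g' w := by
  refine Subtype.ext <| funext fun k => Equiv.ext fun v => ?_
  show topPart (g.val (n + k) (g'.val (n + k) (vappend v w))) = _
  rw [secFun_spec g' w k v]
  rfl

theorem topPart_val (g : AutT m) {n k : ℕ} (u : Vertex m (n + k)) :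
    topPart (g.val (n + k) u)
      = (sectionAut g (restrLe (Nat.le_add_right n k) u)).val k (topPart u) := by
  conv_lhs => rw [← vappend_topPart u]
  rfl

theorem IsRooted.val_apply {s : AutT m} (hs : IsRooted s) {n : ℕ} (w : Vertex m n)
    (i : Fin n) (hi : 0 < (i : ℕ)) : s.val n w i = w i := by
  obtain ⟨k, rfl⟩ : ∃ k, n = 1 + k := ⟨n - 1, by omega⟩
  obtain ⟨j, rfl⟩ : ∃ j : Fin k, i = ⟨1 + j, Nat.add_lt_add_left j.2 1⟩ :=
    ⟨⟨i - 1, by omega⟩, Fin.ext (by simp only; omega)⟩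
  show topPart (s.val (1 + k) w) j = topPart w j
  rw [topPart_val, hs 1 _ one_pos]
  rfl

theorem IsDirectedAut.val_apply {s : AutT m} (hs : IsDirectedAut s) {n : ℕ} (w : Vertex m n)
    (p : ℕ) (hpn : p < n) (hp : (w ⟨p, hpn⟩ : ℕ) ≠ 0)
    (hlow : ∀ q : Fin n, (q : ℕ) < p → (w q : ℕ) = 0)
    (i : Fin n) (hi : p + 1 < (i : ℕ)) : s.val n w i = w i := by
  obtain ⟨k, rfl⟩ : ∃ k, n = (p + 1) + k := ⟨n - (p + 1), by omega⟩
  have hnbr : IsNbr (restrLe (Nat.le_add_right (p + 1) k) w) :=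
    ⟨p.succ_pos, hp, fun q hq => hlow ⟨q, by omega⟩ (by simp only at hq ⊢; omega)⟩
  obtain ⟨j, rfl⟩ : ∃ j : Fin k, i = ⟨p + 1 + j, Nat.add_lt_add_left j.2 _⟩ :=
    ⟨⟨i - (p + 1), by omega⟩, Fin.ext (by simp only; omega)⟩
  show topPart (s.val (p + 1 + k) w) j = topPart w j
  rw [topPart_val]
  exact (hs.2.2 _ _ hnbr).val_apply (topPart w) j (by simp only at hi; omega)

theorem exists_lowest_nonzero {n : ℕ} {w : Vertex m n} (hw : ¬ OnRay w) :
    ∃ p, ∃ hpn : p < n, (w ⟨p, hpn⟩ : ℕ) ≠ 0 ∧ ∀ q : Fin n, (q : ℕ) < p → (w q : ℕ) = 0 := by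
  classical
  have hex : ∃ p, ∃ hpn : p < n, (w ⟨p, hpn⟩ : ℕ) ≠ 0 := by
    obtain ⟨i, hi⟩ := not_forall.mp hw
    exact ⟨i, i.2, hi⟩
  obtain ⟨hpn, hp⟩ := Nat.find_spec hex
  exact ⟨_, hpn, hp, fun q hq => not_not.mp fun hne => Nat.find_min hex hq ⟨q.2, hne⟩⟩

def ZeroFrom {n : ℕ} (c : ℕ) (w : Vertex m n) : Prop :=
  ∀ i : Fin n, c ≤ (i : ℕ) → (w i : ℕ) = 0

theorem ZeroFrom.mono {n c d : ℕ} {w : Vertex m n} (hw : ZeroFrom c w) (hcd : c ≤ d) :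
    ZeroFrom d w :=
  fun i hi => hw i (hcd.trans hi)

theorem OnRay.zeroFrom {n : ℕ} {w : Vertex m n} (hw : OnRay w) : ZeroFrom 0 w :=
  fun i _ => hw i

theorem IsNbr.not_zeroFrom {n c : ℕ} {w : Vertex m n} (hw : IsNbr w) (hc : c < n) :
    ¬ ZeroFrom c w := by
  obtain ⟨hn, hlead, -⟩ := hw
  exact fun hz => hlead (hz _ (by simp only; omega))

def IsDirectedOrRooted (g : AutT m) : Prop := IsDirectedAut g ∨ IsRooted g

theorem IsDirectedOrRooted.zeroFrom_succ {s : AutT m} (hs : IsDirectedOrRooted s)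
    {n c : ℕ} {w : Vertex m n} (hw : ZeroFrom c w) : ZeroFrom (c + 1) (s.val n w) := by
  rcases hs with hdir | hroot
  · by_cases hray : OnRay w
    · rw [hdir.1 n w hray]
      exact hw.mono c.le_succ
    · obtain ⟨p, hpn, hp, hlow⟩ := exists_lowest_nonzero hray
      have hpc : p < c := by
        by_contra hcp
        exact hp (hw _ (by simp only; omega))
      intro i hi
      rw [hdir.val_apply w p hpn hp hlow i (by omega)]
      exact hw i (by omega)
  · intro i hi
    rw [hroot.val_apply w i (by omega)]
    exact hw i (by omega)

theorem zeroFrom_succ_of_zeroFrom_val {s : AutT m} (hs : IsDirectedOrRooted s⁻¹)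
    {n c : ℕ} {w : Vertex m n} (hw : ZeroFrom c (s.val n w)) : ZeroFrom (c + 1) w := by
  simpa only [coe_inv_app] using hs.zeroFrom_succ hw

section Trajectory

variable {n : ℕ} (l : List (AutT m)) (w : Vertex m n)

/-- The path `trajectory l w |l| = w, …, trajectory l w 0 = l.prod(w)`: the vertex `t` is
obtained from `w` by applying the last `|l| - t` letters of `l`. -/
def trajectory (t : ℕ) : Vertex m n := app (l.drop t).prod w

theorem trajectory_eq_val {t : ℕ} (ht : t < l.length) :
    trajectory l w t = l[t].val n (trajectory l w (t + 1)) := by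
  rw [trajectory, List.drop_eq_getElem_cons ht, List.prod_cons]
  rfl

theorem sectionAut_list_prod_mem (K : Subgroup (AutT (shift m n)))
    (hl : ∀ t (ht : t < l.length), sectionAut l[t] (trajectory l w (t + 1)) ∈ K) :
    sectionAut l.prod w ∈ K := by
  induction l with
  | nil =>
    rw [List.prod_nil, sectionAut_one]
    exact one_mem K
  | cons s l ih =>
    rw [List.prod_cons, sectionAut_mul]
    exact mul_mem (hl 0 (by simp)) (ih fun t ht => hl (t + 1) (by simpa using ht))

variable {l w}

theorem zeroFrom_trajectory_zero (hl : ∀ s ∈ l, IsDirectedOrRooted s ∧ IsDirectedOrRooted s⁻¹)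
    {c t : ℕ} (ht : t ≤ l.length) (hw : ZeroFrom c (trajectory l w t)) :
    ZeroFrom (c + t) (trajectory l w 0) := by
  induction t generalizing c with
  | zero => exact hw
  | succ t ih =>
    have hstep := (hl _ (l.getElem_mem ht)).1.zeroFrom_succ hw
    rw [← trajectory_eq_val l w ht] at hstep
    exact (ih (by omega) hstep).mono (by omega)

theorem zeroFrom_trajectory_of_zero (hl : ∀ s ∈ l, IsDirectedOrRooted s ∧ IsDirectedOrRooted s⁻¹)
    {c t : ℕ} (ht : t ≤ l.length) (hw : ZeroFrom c (trajectory l w 0)) :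
    ZeroFrom (c + t) (trajectory l w t) := by
  induction t with
  | zero => exact hw
  | succ t ih =>
    have hprev := ih (by omega)
    rw [trajectory_eq_val l w (by omega)] at hprev
    exact zeroFrom_succ_of_zeroFrom_val (hl _ (l.getElem_mem _)).2 hprev

theorem not_isNbr_trajectory (hl : ∀ s ∈ l, IsDirectedOrRooted s ∧ IsDirectedOrRooted s⁻¹)
    (hn : 2 * l.length < n) {t₀ t : ℕ} (ht₀ : t₀ ≤ l.length)
    (hray : OnRay (trajectory l w t₀)) (ht : t ≤ l.length) :
    ¬ IsNbr (trajectory l w t) := fun hnbr =>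
  hnbr.not_zeroFrom hn <| (zeroFrom_trajectory_of_zero hl ht
    (zeroFrom_trajectory_zero hl ht₀ hray.zeroFrom)).mono (by omega)

end Trajectory

theorem OnRay.eq_rayV (hm : ∀ i, 0 < m i) {n : ℕ} {v : Vertex m n} (hv : OnRay v) :
    v = rayV hm n :=
  funext fun i => Fin.ext (hv i)

theorem IsNbr.eq_nbrV (hm : ∀ i, 0 < m i) {k : ℕ} {v : Vertex m (k + 1)} (hv : IsNbr v) :
    v = nbrV hm (v (Fin.last k)) := by
  obtain ⟨-, -, hzero⟩ := hv
  funext i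
  by_cases hik : (i : ℕ) = k
  · obtain rfl : i = Fin.last k := Fin.ext hik
    simp [nbrV]
  · exact Fin.ext (by simp [nbrV, hik, hzero i (by omega)])

theorem sectionAut_mem_Asub (hm : ∀ i, 0 < m i) {A : Subgroup (AutT m)} {a : AutT m}
    (ha : a ∈ A) (hdir : IsDirectedAut a) {n : ℕ} {v : Vertex m n} (hv : ¬ IsNbr v) :
    sectionAut a v ∈ Asub hm A n := by
  by_cases hray : OnRay v
  · rw [hray.eq_rayV hm]
    exact Subgroup.subset_closure ⟨a, ha, rfl⟩
  · rw [hdir.2.1 n v hray hv]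
    exact one_mem _

theorem sectionAut_mem_Bsub (hm : ∀ i, 0 < m i) {A : Subgroup (AutT m)} {a : AutT m}
    (ha : a ∈ A) (hdir : IsDirectedAut a) {k : ℕ} {v : Vertex m (k + 1)} (hv : ¬ OnRay v) :
    sectionAut a v ∈ Bsub hm A (k + 1) := by
  by_cases hnbr : IsNbr v
  · rw [hnbr.eq_nbrV hm]
    exact Subgroup.subset_closure ⟨a, ha, _, hnbr.2.1, rfl⟩
  · rw [hdir.2.1 (k + 1) v hv hnbr]
    exact one_mem _

theorem exists_list_of_mem_sup {G : Type*} [Group G] {H K : Subgroup G} {g : G}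
    (hg : g ∈ H ⊔ K) : ∃ l : List G, (∀ s ∈ l, s ∈ H ∨ s ∈ K) ∧ l.prod = g := by
  rw [Subgroup.sup_eq_closure, ← Subgroup.mem_toSubmonoid, Subgroup.closure_toSubmonoid,
    Set.union_inv, inv_coe_set, inv_coe_set, Set.union_self] at hg
  exact Submonoid.exists_list_of_mem_closure hg

theorem sections_eventually_in_generators_general
    (m : ℕ → ℕ) (hm : ∀ i, 0 < m i)
    (A B : Subgroup (AutT m))
    (hAdir : ∀ a ∈ A, IsDirectedAut a)
    (hBrooted : ∀ b ∈ B, IsRooted b) :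
    ∀ h : AutT m, h ∈ A ⊔ B →
      ∃ nh : ℕ, ∀ n : ℕ, nh ≤ n → ∀ w : Vertex m n,
        sectionAut h w ∈ Asub hm A n ∨ sectionAut h w ∈ Bsub hm A n := by
  intro h hh
  obtain ⟨l, hl, rfl⟩ := exists_list_of_mem_sup hh
  have hgen : ∀ s, s ∈ A ∨ s ∈ B → IsDirectedOrRooted s :=
    fun s hs => hs.imp (hAdir s) (hBrooted s)
  have hl' : ∀ s ∈ l, IsDirectedOrRooted s ∧ IsDirectedOrRooted s⁻¹ := fun s hs =>
    ⟨hgen s (hl s hs), hgen _ ((hl s hs).imp (inv_mem ·) (inv_mem ·))⟩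
  refine ⟨2 * l.length + 1, fun n hn w => ?_⟩
  obtain ⟨k, rfl⟩ : ∃ k, n = k + 1 := ⟨n - 1, by omega⟩
  by_cases hray : ∃ t ≤ l.length, OnRay (trajectory l w t)
  · obtain ⟨t₀, ht₀, hray⟩ := hray
    refine .inl (sectionAut_list_prod_mem l w _ fun t ht => ?_)
    rcases hl _ (l.getElem_mem ht) with hA | hB
    · exact sectionAut_mem_Asub hm hA (hAdir _ hA)
        (not_isNbr_trajectory hl' (by omega) ht₀ hray ht)
    · rw [hBrooted _ hB _ _ k.succ_pos]
      exact one_mem _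
  · refine .inr (sectionAut_list_prod_mem l w _ fun t ht => ?_)
    rcases hl _ (l.getElem_mem ht) with hA | hB
    · exact sectionAut_mem_Bsub hm hA (hAdir _ hA) fun h => hray ⟨_, ht, h⟩
    · rw [hBrooted _ hB _ _ k.succ_pos]
      exact one_mem _

/-- For every element `h` of a principal group of directed
automorphisms `M(𝒜,ℬ)` there is `n_h` such that for all `n ≥ n_h`, all level-`n`
sections of `h` lie in `𝒜_n ∪ ℬ_n`. -/
theorem sections_eventually_in_generators
    (m : ℕ → ℕ) (hm : ∀ i, 0 < m i) (hm2 : ∀ i, 2 ≤ m i)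
    (M : ℕ) (hbd : ∀ i, m i ≤ M)
    (A B : Subgroup (AutT m))
    (hAfin : (A : Set (AutT m)).Finite) (hAdir : ∀ a ∈ A, IsDirectedAut a)
    (hBfin : (B : Set (AutT m)).Finite) (hBrooted : ∀ b ∈ B, IsRooted b) :
    ∀ h : AutT m, h ∈ A ⊔ B →
      ∃ nh : ℕ, ∀ n : ℕ, nh ≤ n → ∀ w : Vertex m n,
        sectionAut h w ∈ Asub hm A n ∨ sectionAut h w ∈ Bsub hm A n :=
  sections_eventually_in_generators_general m hm A B hAdir hBrooted

end Paper
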